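/- arXiv:2603.22231 — 2 statements merged into one kernel-verified Lean document; each statement's English description precedes it below -/
import Mathlib

section
/- Item-level token probability monotonicity: let T be a finite type of tokens with at least two elements and base logits z : T → ℝ, let each token c be assigned a finite set S(c) of items, let λ ≥ 0, and let b, b' be non-negative bid profiles forming a unilateral bid increase at item i. Suppose there is a distinguished token c* with i ∈ S(c*) and i ∉ S(c) for every token c ≠ c*. Writing z̃_b(c) = z c + λ * log(1 + B(c, b)) with B(c, b) = max of b over S(c) (0 if S(c) is empty), the modulated softmax satisfies softmax(z̃_{b'})_{c*} ≥ softmax(z̃_b)_{c*} and softmax(z̃_{b'})_c ≤ softmax(z̃_b)_c for every c ≠ c*. -/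
/-- Softmax probability of coordinate `i` for logit vector `z` on a finite type. -/
noncomputable def softmax {ι : Type*} [Fintype ι] (z : ι → ℝ) (i : ι) : ℝ :=
  Real.exp (z i) / ∑ j, Real.exp (z j)

/-- The prefix-aggregated (maximum) bid over a finite set of items, `0` if empty. -/
noncomputable def maxBid {ι : Type*} (S : Finset ι) (b : ι → ℝ) : ℝ :=
  if h : S.Nonempty then S.sup' h b else 0

/-- Item-level token probability monotonicity: under a unilateral bid increase at an
item `i` lying only in the subtree of the distinguished token `c*`, the modulated
softmax probability of `c*` weakly increases while that of every other token weakly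
decreases. -/
theorem modulated_softmax_unilateral_increase
    {T : Type*} [Fintype T] (hcard : 1 < Fintype.card T)
    {ι : Type*} (z : T → ℝ) (S : T → Finset ι) (lam : ℝ) (hlam : 0 ≤ lam)
    (b b' : ι → ℝ) (hb : ∀ k, 0 ≤ b k) (hb' : ∀ k, 0 ≤ b' k)
    (i : ι) (hinc : b i ≤ b' i) (hother : ∀ k, k ≠ i → b' k = b k)
    (cstar : T) (hin : i ∈ S cstar) (hout : ∀ c, c ≠ cstar → i ∉ S c) :
    softmax (fun c => z c + lam * Real.log (1 + maxBid (S c) b')) cstar ≥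
      softmax (fun c => z c + lam * Real.log (1 + maxBid (S c) b)) cstar ∧
    ∀ c, c ≠ cstar →
      softmax (fun c => z c + lam * Real.log (1 + maxBid (S c) b')) c ≤
        softmax (fun c => z c + lam * Real.log (1 + maxBid (S c) b)) c := by
  classical
  set f : T → ℝ := fun c => z c + lam * Real.log (1 + maxBid (S c) b) with hf
  set g : T → ℝ := fun c => z c + lam * Real.log (1 + maxBid (S c) b') with hg
  have hble : ∀ k, b k ≤ b' k := by
    intro k
    by_cases h : k = i
    · subst h; exact hinc
    · rw [hother k h]
  have hmax_nonneg : ∀ c, 0 ≤ maxBid (S c) b := by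
    intro c
    unfold maxBid
    split
    · rename_i h
      obtain ⟨x, hx⟩ := h
      exact le_trans (hb x) (Finset.le_sup' b hx)
    · exact le_refl _
  have hmono : maxBid (S cstar) b ≤ maxBid (S cstar) b' := by
    unfold maxBid
    split
    · rename_i h
      exact Finset.sup'_mono_fun (fun x _ => hble x)
    · exact le_refl _
  have heq : ∀ c, c ≠ cstar → maxBid (S c) b' = maxBid (S c) b := by
    intro c hc
    unfold maxBid
    split
    · rename_i h
      exact Finset.sup'_congr h rfl (fun x hx => hother x (fun e => hout c hc (e ▸ hx)))
    · rfl
  have hgf : ∀ c, c ≠ cstar → g c = f c := by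
    intro c hc
    simp only [hf, hg, heq c hc]
  have hfg : f cstar ≤ g cstar := by
    simp only [hf, hg]
    have h1 : (0:ℝ) < 1 + maxBid (S cstar) b := by linarith [hmax_nonneg cstar]
    have h2 : Real.log (1 + maxBid (S cstar) b) ≤ Real.log (1 + maxBid (S cstar) b') := by
      gcongr
    nlinarith
  -- sums
  have hsum : ∀ h : T → ℝ, ∑ j, Real.exp (h j) =
      Real.exp (h cstar) + ∑ j ∈ Finset.univ.erase cstar, Real.exp (h j) := by
    intro h
    exact (Finset.add_sum_erase _ _ (Finset.mem_univ cstar)).symm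
  have hRR : ∑ j ∈ Finset.univ.erase cstar, Real.exp (g j) =
      ∑ j ∈ Finset.univ.erase cstar, Real.exp (f j) := by
    apply Finset.sum_congr rfl
    intro x hx
    rw [hgf x (Finset.ne_of_mem_erase hx)]
  set R : ℝ := ∑ j ∈ Finset.univ.erase cstar, Real.exp (f j) with hR
  have hRpos : 0 < R := by
    obtain ⟨d, hd⟩ := Fintype.exists_ne_of_one_lt_card hcard cstar
    apply Finset.sum_pos (fun x _ => Real.exp_pos _)
    exact ⟨d, Finset.mem_erase.mpr ⟨hd, Finset.mem_univ d⟩⟩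
  have ha : 0 < Real.exp (f cstar) := Real.exp_pos _
  have hA : 0 < Real.exp (g cstar) := Real.exp_pos _
  have haA : Real.exp (f cstar) ≤ Real.exp (g cstar) := Real.exp_le_exp.mpr hfg
  constructor
  · unfold softmax
    rw [hsum f, hsum g, hRR, ← hR]
    rw [ge_iff_le, div_le_div_iff₀ (by linarith) (by linarith)]
    nlinarith
  · intro c hc
    unfold softmax
    rw [hsum f, hsum g, hRR, ← hR, hgf c hc]
    apply div_le_div_of_nonneg_left (le_of_lt (Real.exp_pos _)) (by linarith)
    linarith
end

section
/- Allocative monotonicity of the factorized GEM-allocation rule (flat-vocabulary case of Proposition 1): let I be a finite nonempty type of sponsored items equipped with a linear tie-breaking order, base token logits z : I → ℝ, real slot logits z_AD and z_ORG, and λ ≥ 0. For a non-negative bid profile b : I → ℝ define the modulated token logits z̃_b(j) = z j + λ * log(1 + b j), the deterministic winner W(b) as the lexicographic argmax of (z̃_b(j), j), the modulated slot probability P_λ(AD | b) = exp(z_AD + λ * log(1 + max_j b j)) / (exp(z_AD + λ * log(1 + max_j b j)) + exp(z_ORG)), and the allocation x_i(b) = P_λ(AD | b) if W(b) = i and x_i(b)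 = 0 otherwise. Then for any unilateral bid increase from b to b' at item i (b' i ≥ b i and b' k = b k for k ≠ i, all bids non-negative), x_i(b') ≥ x_i(b). -/
/-- Modulated sponsored-slot probability given base logits `zAD`, `zORG`, modulation
strength `lam` and maximum bid `bmax`. -/
noncomputable def adProb (zAD zORG lam bmax : ℝ) : ℝ :=
  Real.exp (zAD + lam * Real.log (1 + bmax)) /
    (Real.exp (zAD + lam * Real.log (1 + bmax)) + Real.exp zORG)

/-- The deterministic winner under scores `s` with tie-breaking by the fixed linear
order on `ι`: the unique element maximal for the lexicographic comparison of
`(s j, j)`. -/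
noncomputable def winner {ι : Type*} [Fintype ι] [Nonempty ι] [LinearOrder ι]
    (s : ι → ℝ) : ι :=
  (ofLex ((Finset.univ.image fun j => toLex ((s j, j) : ℝ × ι)).max'
    (Finset.univ_nonempty.image _))).2

/-- The factorized GEM-allocation for item `i` under bid profile `b`: the modulated
slot probability if `i` is the (bid-modulated) deterministic winner, else `0`. -/
noncomputable def gemAlloc {I : Type*} [Fintype I] [Nonempty I] [LinearOrder I]
    (z : I → ℝ) (zAD zORG lam : ℝ) (i : I) (b : I → ℝ) : ℝ :=
  if winner (fun j => z j + lam * Real.log (1 + b j)) = i then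
    adProb zAD zORG lam (Finset.univ.sup' Finset.univ_nonempty b)
  else 0

/-!
Raising `b i` raises the modulated score of item `i` and leaves every other score unchanged,
so if `i` was the lexicographic winner it stays the winner. The slot probability is the sigmoid
of `zAD + λ log(1 + max b) - zORG`, which does not decrease when the maximal bid grows; and when
`i` does not win under `b` its allocation is `0`.
-/

open Finset Real

lemma mul_log_one_add_le_mul_log_one_add {lam x y : ℝ} (hlam : 0 ≤ lam) (hx : 0 ≤ x)
    (hxy : x ≤ y) : lam * log (1 + x) ≤ lam * log (1 + y) :=
  mul_le_mul_of_nonneg_left (log_le_log (by linarith) (by linarith)) hlam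

lemma adProb_eq_sigmoid (zAD zORG lam bmax : ℝ) :
    adProb zAD zORG lam bmax = sigmoid (zAD + lam * log (1 + bmax) - zORG) := by
  rw [adProb, sigmoid_def, neg_sub, exp_sub, one_add_div (exp_pos _).ne', inv_div]

lemma adProb_le_adProb {zAD zORG lam x y : ℝ} (hlam : 0 ≤ lam) (hx : 0 ≤ x) (hxy : x ≤ y) :
    adProb zAD zORG lam x ≤ adProb zAD zORG lam y := by
  simp only [adProb_eq_sigmoid]
  exact sigmoid_le (by linarith [mul_log_one_add_le_mul_log_one_add hlam hx hxy])

section Winner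

variable {ι : Type*} [Fintype ι] [Nonempty ι] [LinearOrder ι]

lemma toLex_winner_eq_max' (s : ι → ℝ) :
    toLex (s (winner s), winner s) =
      (univ.image fun j ↦ toLex (s j, j)).max' (univ_nonempty.image _) := by
  obtain ⟨w, -, hw⟩ :=
    mem_image.1 (max'_mem (univ.image fun j ↦ toLex (s j, j)) (univ_nonempty.image _))
  have hwinner : winner s = w := by rw [winner, ← hw]; rfl
  rw [hwinner, hw]

lemma toLex_le_toLex_winner (s : ι → ℝ) (j : ι) :
    toLex (s j, j) ≤ toLex (s (winner s), winner s) := by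
  rw [toLex_winner_eq_max']
  exact le_max' _ _ (mem_image_of_mem (fun j ↦ toLex (s j, j)) (mem_univ j))

lemma winner_eq_of_forall_toLex_le {s : ι → ℝ} {i : ι}
    (h : ∀ j, toLex (s j, j) ≤ toLex (s i, i)) : winner s = i := by
  have hmax : toLex (s i, i) = (univ.image fun j ↦ toLex (s j, j)).max' (univ_nonempty.image _) :=
    le_antisymm (le_max' _ _ (mem_image_of_mem (fun j ↦ toLex (s j, j)) (mem_univ i)))
      (max'_le _ _ _ (by simpa using h))
  rw [winner, ← hmax]
  rfl

lemma winner_eq_of_le_of_forall_ne_le {s s' : ι → ℝ} (hi : s (winner s) ≤ s' (winner s))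
    (hother : ∀ j, j ≠ winner s → s' j ≤ s j) : winner s' = winner s := by
  refine winner_eq_of_forall_toLex_le fun j ↦ ?_
  obtain rfl | hj := eq_or_ne j (winner s)
  · exact le_rfl
  calc toLex (s' j, j) ≤ toLex (s j, j) := Prod.Lex.toLex_mono ⟨hother j hj, le_rfl⟩
    _ ≤ toLex (s (winner s), winner s) := toLex_le_toLex_winner s j
    _ ≤ toLex (s' (winner s), winner s) := Prod.Lex.toLex_mono ⟨hi, le_rfl⟩

end Winner

theorem gemAlloc_mono_unilateral_increase_general
    {I : Type*} [Fintype I] [Nonempty I] [LinearOrder I]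
    (z : I → ℝ) (zAD zORG lam : ℝ) (hlam : 0 ≤ lam)
    (b b' : I → ℝ) (hb : ∀ k, 0 ≤ b k)
    (i : I) (hinc : b i ≤ b' i) (hother : ∀ k, k ≠ i → b' k = b k) :
    gemAlloc z zAD zORG lam i b ≤ gemAlloc z zAD zORG lam i b' := by
  have hbb' : b ≤ b' := fun k ↦ by
    obtain rfl | hk := eq_or_ne k i
    exacts [hinc, (hother k hk).ge]
  unfold gemAlloc
  split_ifs with hwin hwin'
  · obtain ⟨k⟩ := ‹Nonempty I›
    exact adProb_le_adProb hlam ((hb k).trans (le_sup' b (mem_univ k)))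
      (sup'_mono_fun fun k _ ↦ hbb' k)
  · subst hwin
    refine absurd (winner_eq_of_le_of_forall_ne_le ?_ fun j hj ↦ ?_) hwin'
    · exact add_le_add_right (mul_log_one_add_le_mul_log_one_add hlam (hb _) hinc) _
    · rw [hother j hj]
  · rw [adProb_eq_sigmoid]
    exact sigmoid_nonneg _
  · exact le_rfl

/-- Allocative monotonicity of the factorized GEM-allocation rule (flat-vocabulary
case): a unilateral bid increase at item `i` weakly increases `i`'s allocation. -/
theorem gemAlloc_mono_unilateral_increase
    {I : Type*} [Fintype I] [Nonempty I] [LinearOrder I]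
    (z : I → ℝ) (zAD zORG lam : ℝ) (hlam : 0 ≤ lam)
    (b b' : I → ℝ) (hb : ∀ k, 0 ≤ b k) (hb' : ∀ k, 0 ≤ b' k)
    (i : I) (hinc : b i ≤ b' i) (hother : ∀ k, k ≠ i → b' k = b k) :
    gemAlloc z zAD zORG lam i b ≤ gemAlloc z zAD zORG lam i b' :=
  gemAlloc_mono_unilateral_increase_general z zAD zORG lam hlam b b' hb i hinc hother
end
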